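/- Let $\ell$ be a nonnegative integer, $U$ the $(\ell+1)\times(\ell+1)$ matrix with entries $U_{jk} = {}_3F_2(-k,-j,k+1;1,-\ell;1)$, and let $C_0 = \sum_{j=1}^{\ell} j(\ell-j+1)(E_{j,j-1}-E_{j,j})$, $C_1 = \sum_{j=0}^{\ell-1}(j+1)(\ell-j)(E_{j,j+1}-E_{j,j})$, $Q_0 = \sum_{j=0}^{\ell-1} \frac{(j+1)(\ell+j+2)}{2j+3} E_{j,j+1}$, $Q_1 = \sum_{j=1}^{\ell} \frac{j(\ell-j+1)}{2j-1} E_{j,j-1}$, $J = \sum_{j=0}^{\ell} j E_{jj}$. Then $(C_1 - C_0) U = U \big(Q_1 J - Q_0(J+I)\big)$. -/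

import Mathlib

/-- Pochhammer symbol (rising factorial) over ℂ. -/
noncomputable def poch (x : ℂ) (m : ℕ) : ℂ := ∏ i ∈ Finset.range m, (x + i)

/-- Hahn polynomial value `U_{j k} = ₃F₂(-k, -j, k+1; 1, -ℓ; 1)` (terminating sum). -/
noncomputable def hahnU (ℓ j k : ℕ) : ℂ :=
  ∑ m ∈ Finset.range (k + 1),
    (poch (-(k : ℂ)) m * poch (-(j : ℂ)) m * poch ((k : ℂ) + 1) m) /
      (poch 1 m * poch (-(ℓ : ℂ)) m * (Nat.factorial m : ℂ))

/-- The matrix `U` with entries `U_{jk}`. -/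
noncomputable def Umat (ℓ : ℕ) : Matrix (Fin (ℓ + 1)) (Fin (ℓ + 1)) ℂ :=
  Matrix.of fun j k => hahnU ℓ (j : ℕ) (k : ℕ)

open Matrix in
/-- `C₀ = ∑_{j=1}^{ℓ} j(ℓ-j+1)(E_{j,j-1} - E_{j,j})` (the `j = 0` term vanishes). -/
noncomputable def C0 (ℓ : ℕ) : Matrix (Fin (ℓ + 1)) (Fin (ℓ + 1)) ℂ :=
  ∑ j : Fin (ℓ + 1),
    (((j : ℕ) : ℂ) * ((ℓ : ℂ) - (j : ℕ) + 1)) •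
      (single j (j - 1) 1 - single j j 1)

open Matrix in
/-- `C₁ = ∑_{j=0}^{ℓ-1} (j+1)(ℓ-j)(E_{j,j+1} - E_{j,j})` (the `j = ℓ` term vanishes). -/
noncomputable def C1 (ℓ : ℕ) : Matrix (Fin (ℓ + 1)) (Fin (ℓ + 1)) ℂ :=
  ∑ j : Fin (ℓ + 1),
    ((((j : ℕ) : ℂ) + 1) * ((ℓ : ℂ) - (j : ℕ))) •
      (single j (j + 1) 1 - single j j 1)

/-- `Q₀ = ∑_{j=0}^{ℓ-1} ((j+1)(ℓ+j+2)/(2j+3)) E_{j,j+1}`. -/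
noncomputable def Q0 (ℓ : ℕ) : Matrix (Fin (ℓ + 1)) (Fin (ℓ + 1)) ℂ :=
  Matrix.of fun j k =>
    if (k : ℕ) = (j : ℕ) + 1 then
      (((j : ℕ) : ℂ) + 1) * ((ℓ : ℂ) + (j : ℕ) + 2) / (2 * ((j : ℕ) : ℂ) + 3)
    else 0

/-- `Q₁ = ∑_{j=1}^{ℓ} (j(ℓ-j+1)/(2j-1)) E_{j,j-1}`. -/
noncomputable def Q1 (ℓ : ℕ) : Matrix (Fin (ℓ + 1)) (Fin (ℓ + 1)) ℂ :=
  Matrix.of fun j k =>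
    if (j : ℕ) = (k : ℕ) + 1 then
      ((j : ℕ) : ℂ) * ((ℓ : ℂ) - (j : ℕ) + 1) / (2 * ((j : ℕ) : ℂ) - 1)
    else 0

/-- `J = ∑_j j E_{jj}`. -/
noncomputable def Jmat (ℓ : ℕ) : Matrix (Fin (ℓ + 1)) (Fin (ℓ + 1)) ℂ :=
  Matrix.diagonal fun j => ((j : ℕ) : ℂ)

open Finset

lemma poch_zero (x : ℂ) : poch x 0 = 1 := by simp [poch]

lemma poch_succ (x : ℂ) (n : ℕ) : poch x (n+1) = poch x n * (x + n) :=
  Finset.prod_range_succ _ _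

lemma poch_succ' (x : ℂ) (n : ℕ) : poch x (n+1) = x * poch (x+1) n := by
  rw [poch, Finset.prod_range_succ']
  rw [mul_comm]
  congr 1
  · push_cast; simp
  · unfold poch
    apply Finset.prod_congr rfl
    intro i _
    push_cast; ring

lemma poch_succ'' (x : ℂ) (n : ℕ) :
    x * poch (x+1) (n+1) = poch x n * (x + n) * (x + n + 1) := by
  have h1 : poch x (n+2) = x * poch (x+1) (n+1) := poch_succ' x (n+1)
  have h2 : poch x (n+2) = poch x n * (x + n) * (x + n + 1) := by
    rw [poch_succ, poch_succ]; push_cast; ring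
  rw [← h1, h2]

lemma poch_one (m : ℕ) : poch 1 m = (m.factorial : ℂ) := by
  induction m with
  | zero => simp [poch]
  | succ n ih => rw [poch_succ, ih, Nat.factorial_succ]; push_cast; ring

lemma poch_neg_nat_eq_zero {k m : ℕ} (h : k < m) : poch (-(k : ℂ)) m = 0 := by
  apply Finset.prod_eq_zero (Finset.mem_range.2 h)
  simp

lemma poch_neg_nat_ne_zero {ℓ m : ℕ} (h : m ≤ ℓ) : poch (-(ℓ : ℂ)) m ≠ 0 := by
  apply Finset.prod_ne_zero_iff.2
  intro i hi
  have hi' : i < ℓ := lt_of_lt_of_le (Finset.mem_range.1 hi) h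
  intro hc
  have : (i : ℂ) = (ℓ : ℂ) := by linear_combination hc
  exact absurd (Nat.cast_injective this) (Nat.ne_of_lt hi')

/-- The summand of `hahnU`, with complex parameters. -/
noncomputable def bt (z x y : ℂ) (m : ℕ) : ℂ :=
  (poch (-y) m * poch (-x) m * poch (y+1) m) /
    (poch 1 m * poch (-z) m * (m.factorial : ℂ))

/-- The telescoping certificate. -/
noncomputable def gc (z x y : ℂ) : ℕ → ℂ
  | 0 => 0
  | (n+1) => (2*y+1) * ((n : ℂ)*((n : ℂ)-1-2*x) + y*(y+1)) * bt z x y n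

/-- The combined per-term expression. -/
noncomputable def sc (z x y : ℂ) (m : ℕ) : ℂ :=
  (2*y+1) * ((x+1)*(z-x)*(bt z (x+1) y m - bt z x y m)
    - x*(z-x+1)*(bt z (x-1) y m - bt z x y m))
  - y*(y+1)*(z-y) * bt z x (y+1) m
  + y*(y+1)*(z+y+1) * bt z x (y-1) m

lemma sc_zero (z x y : ℂ) : sc z x y 0 = gc z x y 1 - gc z x y 0 := by
  simp [sc, gc, bt, poch_zero]
  ring

lemma poch_neg_shift (x : ℂ) (n : ℕ) :
    (-x) * poch (-x+1) (n+1) = poch (-x) n * (-x + n) * (-x + n + 1) :=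
  poch_succ'' (-x) n

set_option maxHeartbeats 1000000 in
lemma sc_step (z x y : ℂ) (n : ℕ)
    (hL : poch (-z) n ≠ 0) (hnz : (-z + (n : ℂ)) ≠ 0) :
    sc z x y (n+1) = gc z x y (n+2) - gc z x y (n+1) := by
  have hfac : ((n.factorial : ℕ) : ℂ) ≠ 0 := Nat.cast_ne_zero.2 n.factorial_ne_zero
  have hn1 : ((n : ℂ) + 1) ≠ 0 := by
    intro hc
    have h2 : ((n+1 : ℕ) : ℂ) = 0 := by push_cast; linear_combination hc
    exact Nat.cast_ne_zero.2 (Nat.succ_ne_zero n) h2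
  -- numerator rewriting facts
  have h1 : poch (-x) (n+1) = poch (-x) n * (-x + n) := poch_succ _ _
  have h2 : poch (-(x+1)) (n+1) = -(x+1) * poch (-x) n := by
    rw [poch_succ', show (-(x+1)+1 : ℂ) = -x by ring]
  have h4 : poch (-y) (n+1) = poch (-y) n * (-y + n) := poch_succ _ _
  have h5 : poch (-(y+1)) (n+1) = -(y+1) * poch (-y) n := by
    rw [poch_succ', show (-(y+1)+1 : ℂ) = -y by ring]
  have h7 : poch (y+1) (n+1) = poch (y+1) n * (y+1+n) := poch_succ _ _
  have h9 : poch (y-1+1) (n+1) = y * poch (y+1) n := by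
    rw [show (y-1+1 : ℂ) = y by ring, poch_succ']
  have hxm : x * poch (-(x-1)) (n+1) = -(poch (-x) n * (-x + n) * (-x + n + 1)) := by
    rw [show (-(x-1) : ℂ) = -x+1 by ring]
    linear_combination -(poch_neg_shift x n)
  have hym : y * poch (-(y-1)) (n+1) = -(poch (-y) n * (-y + n) * (-y + n + 1)) := by
    rw [show (-(y-1) : ℂ) = -y+1 by ring]
    linear_combination -(poch_neg_shift y n)
  have hq2 : (y+1) * poch (y+1+1) (n+1) = poch (y+1) n * (y+1+n) * (y+1+n+1) :=
    poch_succ'' (y+1) n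
  -- the common denominator at level n+1
  set D1 : ℂ := poch 1 (n+1) * poch (-z) (n+1) * ((n+1).factorial : ℂ) with hD1def
  have hD1 : D1 = (poch 1 n * poch (-z) n * (n.factorial : ℂ)) * ((n+1)*(n+1)*(-z+n)) := by
    rw [hD1def, poch_one, poch_one, poch_succ, Nat.factorial_succ]
    push_cast
    ring
  have hD0ne : poch 1 n * poch (-z) n * (n.factorial : ℂ) ≠ 0 := by
    rw [poch_one]
    exact mul_ne_zero (mul_ne_zero hfac hL) hfac
  have hD1ne : D1 ≠ 0 := by
    rw [hD1]
    exact mul_ne_zero hD0ne (mul_ne_zero (mul_ne_zero hn1 hn1) hnz)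
  -- express everything over D1
  have eplus : bt z (x+1) y (n+1)
      = ((poch (-y) n * (-y+(n:ℂ))) * (-(x+1) * poch (-x) n) * (poch (y+1) n * (y+1+n))) / D1 := by
    rw [bt, h2, h4, h7]
  have e0 : bt z x y (n+1)
      = ((poch (-y) n * (-y+(n:ℂ))) * (poch (-x) n * (-x+n)) * (poch (y+1) n * (y+1+n))) / D1 := by
    rw [bt, h1, h4, h7]
  have eminus : x * bt z (x-1) y (n+1)
      = (-((poch (-y) n * (-y+(n:ℂ))) * (poch (-x) n * (-x+n) * (-x+n+1)) * (poch (y+1) n * (y+1+n)))) / D1 := by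
    rw [bt, h4, h7, ← mul_div_assoc]
    congr 1
    linear_combination ((poch (-y) n * (-y+(n:ℂ))) * (poch (y+1) n * (y+1+n))) * hxm
  have e1 : (y+1) * bt z x (y+1) (n+1)
      = ((-(y+1) * poch (-y) n) * (poch (-x) n * (-x+(n:ℂ))) * (poch (y+1) n * (y+1+n) * (y+1+n+1))) / D1 := by
    rw [bt, h1, h5, ← mul_div_assoc]
    congr 1
    linear_combination ((-(y+1) * poch (-y) n) * (poch (-x) n * (-x+(n:ℂ)))) * hq2
  have e2 : y * bt z x (y-1) (n+1)
      = (-((poch (-y) n * (-y+(n:ℂ)) * (-y+n+1)) * (poch (-x) n * (-x+n)) * (y * poch (y+1) n))) / D1 := by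
    rw [bt, h1, h9, ← mul_div_assoc]
    congr 1
    linear_combination ((poch (-x) n * (-x+(n:ℂ))) * (y * poch (y+1) n)) * hym
  have elow : bt z x y n
      = (poch (-y) n * poch (-x) n * poch (y+1) n * (((n:ℂ)+1)*((n:ℂ)+1)*(-z+n))) / D1 := by
    rw [bt, eq_div_iff hD1ne, hD1]
    have hp1 : poch 1 n ≠ 0 := by rw [poch_one]; exact hfac
    field_simp
  -- final combination
  show (2*y+1) * ((x+1)*(z-x)*(bt z (x+1) y (n+1) - bt z x y (n+1))
        - x*(z-x+1)*(bt z (x-1) y (n+1) - bt z x y (n+1)))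
      - y*(y+1)*(z-y) * bt z x (y+1) (n+1)
      + y*(y+1)*(z+y+1) * bt z x (y-1) (n+1)
    = (2*y+1) * (((n+1 : ℕ) : ℂ)*(((n+1 : ℕ) : ℂ)-1-2*x) + y*(y+1)) * bt z x y (n+1)
      - ((2*y+1) * ((n : ℂ)*((n : ℂ)-1-2*x) + y*(y+1)) * bt z x y n)
  push_cast
  linear_combination ((2*y+1)*(x+1)*(z-x)) * eplus
    + ((2*y+1)*(-(x+1)*(z-x) + x*(z-x+1)) - (2*y+1)*(((n:ℂ)+1)*((n:ℂ)-2*x)+y*(y+1))) * e0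
    + (-(2*y+1)*(z-x+1)) * eminus
    + (-y*(z-y)) * e1
    + ((y+1)*(z+y+1)) * e2
    + ((2*y+1)*((n:ℂ)*((n:ℂ)-1-2*x)+y*(y+1))) * elow


lemma gc_succ (z x y : ℂ) (n : ℕ) :
    gc z x y (n+1) = (2*y+1) * ((n : ℂ)*((n : ℂ)-1-2*x) + y*(y+1)) * bt z x y n := rfl

lemma gc_zero (z x y : ℂ) : gc z x y 0 = 0 := rfl

lemma bt_y_zero (z x : ℂ) {b m : ℕ} (h : b < m) : bt z x (b : ℂ) m = 0 := by
  rw [bt, poch_neg_nat_eq_zero h]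
  simp

lemma bt_x_zero (z y : ℂ) {a m : ℕ} (h : a < m) : bt z (a : ℂ) y m = 0 := by
  rw [bt, poch_neg_nat_eq_zero h]
  simp

lemma hahnU_eq_sum (ℓ a b : ℕ) {n : ℕ} (h : b + 1 ≤ n) :
    hahnU ℓ a b = ∑ m ∈ Finset.range n, bt (ℓ : ℂ) (a : ℂ) (b : ℂ) m := by
  have h0 : hahnU ℓ a b = ∑ m ∈ Finset.range (b+1), bt (ℓ : ℂ) (a : ℂ) (b : ℂ) m := rfl
  rw [h0]
  apply Finset.sum_subset (Finset.range_subset_range.2 h)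
  intro m _ hm
  exact bt_y_zero _ _ (Nat.not_lt.1 (fun hc => hm (Finset.mem_range.2 hc)))

lemma sum_sc (ℓ j k : ℕ) (hk : 1 ≤ k) (hkl : k ≤ ℓ) (hjl : j ≤ ℓ) :
    ∑ m ∈ Finset.range (k+2), sc (ℓ : ℂ) (j : ℂ) (k : ℂ) m = 0 := by
  have hstep : ∀ m ∈ Finset.range (k+1),
      sc (ℓ : ℂ) (j : ℂ) (k : ℂ) m = gc (ℓ : ℂ) (j : ℂ) (k : ℂ) (m+1) - gc (ℓ : ℂ) (j : ℂ) (k : ℂ) m := by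
    intro m hm
    match m with
    | 0 => exact sc_zero _ _ _
    | (n+1) =>
      have hn : n + 1 ≤ k := Nat.lt_succ_iff.1 (Finset.mem_range.1 hm)
      have hnl : n < ℓ := lt_of_lt_of_le hn hkl
      apply sc_step
      · exact poch_neg_nat_ne_zero (le_of_lt hnl)
      · intro hc
        have : (n : ℂ) = (ℓ : ℂ) := by linear_combination hc
        exact absurd (Nat.cast_injective this) (Nat.ne_of_lt hnl)
  rw [Finset.sum_range_succ, Finset.sum_congr rfl hstep,
    Finset.sum_range_sub (gc (ℓ : ℂ) (j : ℂ) (k : ℂ))]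
  rcases lt_or_eq_of_le hkl with hlt | heq
  · rw [sc_step _ _ _ k (poch_neg_nat_ne_zero (le_of_lt hlt))
      (by intro hc
          have : (k : ℂ) = (ℓ : ℂ) := by linear_combination hc
          exact absurd (Nat.cast_injective this) (Nat.ne_of_lt hlt))]
    have hg2 : gc (ℓ : ℂ) (j : ℂ) (k : ℂ) (k+2) = 0 := by
      rw [show k+2 = (k+1)+1 by ring, gc_succ, bt_y_zero _ _ (Nat.lt_succ_self k)]
      ring
    rw [hg2, gc_zero]
    ring
  · subst heq
    have hsc : sc (k : ℂ) (j : ℂ) (k : ℂ) (k+1) = 0 := by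
      have hb1 : bt (k : ℂ) ((j : ℂ)+1) (k : ℂ) (k+1) = 0 := bt_y_zero _ _ (Nat.lt_succ_self k)
      have hb2 : bt (k : ℂ) (j : ℂ) (k : ℂ) (k+1) = 0 := bt_y_zero _ _ (Nat.lt_succ_self k)
      have hb3 : bt (k : ℂ) ((j : ℂ)-1) (k : ℂ) (k+1) = 0 := bt_y_zero _ _ (Nat.lt_succ_self k)
      have hb4 : bt (k : ℂ) (j : ℂ) ((k : ℂ)-1) (k+1) = 0 := by
        rw [show ((k : ℂ) - 1) = ((k - 1 : ℕ) : ℂ) by push_cast [hk]; ring]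
        exact bt_y_zero _ _ (by omega)
      simp only [sc, hb1, hb2, hb3, hb4, sub_self]
      ring
    have hg1 : gc (k : ℂ) (j : ℂ) (k : ℂ) (k+1) = 0 := by
      rw [gc_succ]
      rcases lt_or_eq_of_le hjl with hj | hj
      · rw [bt_x_zero _ _ hj, mul_zero]
      · subst hj
        rw [show ((j : ℂ)*((j : ℂ)-1-2*(j : ℂ)) + (j : ℂ)*((j : ℂ)+1)) = 0 by ring]
        ring
    rw [hsc, hg1, gc_zero]
    ring

lemma combo (s : Finset ℕ) (C c1 c2 c3 c4 : ℂ) (f1 f0 f2 f3 f4 : ℕ → ℂ) :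
    ∑ m ∈ s, (C*(c1*(f1 m - f0 m) - c2*(f2 m - f0 m)) - c3*f3 m + c4*f4 m)
    = C*(c1*((∑ m ∈ s, f1 m) - ∑ m ∈ s, f0 m) - c2*((∑ m ∈ s, f2 m) - ∑ m ∈ s, f0 m))
      - c3*(∑ m ∈ s, f3 m) + c4*(∑ m ∈ s, f4 m) := by
  classical
  induction s using Finset.induction_on with
  | empty => simp
  | insert a s h ih =>
    rw [Finset.sum_insert h, Finset.sum_insert h, Finset.sum_insert h,
      Finset.sum_insert h, Finset.sum_insert h, Finset.sum_insert h, ih]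
    ring

lemma key (ℓ j k : ℕ) (hjl : j ≤ ℓ) (hkl : k ≤ ℓ) :
    (2*(k : ℂ)+1) * (((j : ℂ)+1) * ((ℓ : ℂ)-(j : ℂ)) * (hahnU ℓ (j+1) k - hahnU ℓ j k)
      - (j : ℂ) * ((ℓ : ℂ)-(j : ℂ)+1) * (hahnU ℓ (j-1) k - hahnU ℓ j k))
    = (k : ℂ)*((k : ℂ)+1)*((ℓ : ℂ)-(k : ℂ)) * hahnU ℓ j (k+1)
      - (k : ℂ)*((k : ℂ)+1)*((ℓ : ℂ)+(k : ℂ)+1) * hahnU ℓ j (k-1) := by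
  rcases Nat.eq_zero_or_pos k with hk0 | hk
  · subst hk0
    have h1 : ∀ a : ℕ, hahnU ℓ a 0 = 1 := by
      intro a
      simp [hahnU, poch_zero]
    simp only [h1, Nat.zero_sub, Nat.cast_zero]
    ring
  · -- k ≥ 1
    have hsum := sum_sc ℓ j k hk hkl hjl
    have e1 : hahnU ℓ (j+1) k = ∑ m ∈ Finset.range (k+2), bt (ℓ : ℂ) ((j : ℂ)+1) (k : ℂ) m := by
      rw [hahnU_eq_sum ℓ (j+1) k (by omega : k+1 ≤ k+2)]
      push_cast
      rfl
    have e0 : hahnU ℓ j k = ∑ m ∈ Finset.range (k+2), bt (ℓ : ℂ) (j : ℂ) (k : ℂ) m :=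
      hahnU_eq_sum ℓ j k (by omega)
    have e3 : hahnU ℓ j (k+1) = ∑ m ∈ Finset.range (k+2), bt (ℓ : ℂ) (j : ℂ) ((k : ℂ)+1) m := by
      rw [hahnU_eq_sum ℓ j (k+1) (by omega : (k+1)+1 ≤ k+2)]
      push_cast
      rfl
    have e4 : hahnU ℓ j (k-1) = ∑ m ∈ Finset.range (k+2), bt (ℓ : ℂ) (j : ℂ) ((k : ℂ)-1) m := by
      rw [hahnU_eq_sum ℓ j (k-1) (by omega : (k-1)+1 ≤ k+2)]
      rw [show ((k-1 : ℕ) : ℂ) = (k : ℂ) - 1 by push_cast [hk]; ring]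
    rw [show (fun m => sc (ℓ : ℂ) (j : ℂ) (k : ℂ) m) = fun m =>
      ((2*(k : ℂ)+1)*((((j : ℂ))+1)*((ℓ : ℂ)-(j : ℂ))*(bt (ℓ : ℂ) ((j : ℂ)+1) (k : ℂ) m - bt (ℓ : ℂ) (j : ℂ) (k : ℂ) m)
        - (j : ℂ)*((ℓ : ℂ)-(j : ℂ)+1)*(bt (ℓ : ℂ) ((j : ℂ)-1) (k : ℂ) m - bt (ℓ : ℂ) (j : ℂ) (k : ℂ) m))
        - ((k : ℂ)*((k : ℂ)+1)*((ℓ : ℂ)-(k : ℂ)))*bt (ℓ : ℂ) (j : ℂ) ((k : ℂ)+1) m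
        + ((k : ℂ)*((k : ℂ)+1)*((ℓ : ℂ)+(k : ℂ)+1))*bt (ℓ : ℂ) (j : ℂ) ((k : ℂ)-1) m) from rfl] at hsum
    rw [combo] at hsum
    rcases Nat.eq_zero_or_pos j with hj0 | hj
    · subst hj0
      rw [e1, e0, e3, e4]
      push_cast at hsum ⊢
      linear_combination hsum
    · have e2 : hahnU ℓ (j-1) k = ∑ m ∈ Finset.range (k+2), bt (ℓ : ℂ) ((j : ℂ)-1) (k : ℂ) m := by
        rw [hahnU_eq_sum ℓ (j-1) k (by omega : k+1 ≤ k+2)]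
        rw [show ((j-1 : ℕ) : ℂ) = (j : ℂ) - 1 by push_cast [hj]; ring]
      rw [e1, e0, e2, e3, e4]
      linear_combination hsum


lemma C1_apply (ℓ : ℕ) (p r : Fin (ℓ+1)) :
    C1 ℓ p r = (((p : ℕ) : ℂ)+1) * ((ℓ : ℂ) - (p : ℕ)) *
      ((if p+1 = r then 1 else 0) - (if p = r then 1 else 0)) := by
  rw [C1, Matrix.sum_apply]
  rw [Finset.sum_eq_single p]
  · simp [Matrix.single]
  · intro b _ hb
    simp [Matrix.single, hb]
  · simp

lemma C0_apply (ℓ : ℕ) (p r : Fin (ℓ+1)) :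
    C0 ℓ p r = ((p : ℕ) : ℂ) * ((ℓ : ℂ) - (p : ℕ) + 1) *
      ((if p-1 = r then 1 else 0) - (if p = r then 1 else 0)) := by
  rw [C0, Matrix.sum_apply]
  rw [Finset.sum_eq_single p]
  · simp [Matrix.single]
  · intro b _ hb
    simp [Matrix.single, hb]
  · simp

lemma lhs_entry (ℓ : ℕ) (p q : Fin (ℓ+1)) :
    ((C1 ℓ - C0 ℓ) * Umat ℓ) p q
    = (((p : ℕ) : ℂ)+1) * ((ℓ : ℂ)-(p : ℕ)) * (hahnU ℓ ((p : ℕ)+1) (q : ℕ) - hahnU ℓ (p : ℕ) (q : ℕ))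
      - ((p : ℕ) : ℂ) * ((ℓ : ℂ)-(p : ℕ)+1) * (hahnU ℓ ((p : ℕ)-1) (q : ℕ) - hahnU ℓ (p : ℕ) (q : ℕ)) := by
  rw [Matrix.mul_apply]
  simp only [Matrix.sub_apply, C1_apply, C0_apply, Umat, Matrix.of_apply]
  simp only [sub_mul, mul_sub, ite_mul, mul_ite, one_mul, zero_mul, mul_zero, mul_one,
    Finset.sum_sub_distrib, Finset.sum_ite_eq, Finset.mem_univ, if_true]
  -- now entries are hahnU at Fin-coerced indices
  rcases Nat.lt_or_ge (p : ℕ) ℓ with hp | hp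
  · have h1 : ((p+1 : Fin (ℓ+1)) : ℕ) = (p : ℕ) + 1 := by
      rw [Fin.val_add_one]
      simp [Fin.ext_iff, Nat.ne_of_lt hp]
    rcases Nat.eq_zero_or_pos (p : ℕ) with hp0 | hp0
    · have h2 : ((p : ℕ) : ℂ) = 0 := by rw [hp0]; simp
      rw [h1, h2]
      ring
    · have h2 : ((p-1 : Fin (ℓ+1)) : ℕ) = (p : ℕ) - 1 := by
        rw [Fin.coe_sub_one]
        simp [Fin.ext_iff, Nat.pos_iff_ne_zero.1 hp0]
      rw [h1, h2]
  · have hpl : (p : ℕ) = ℓ := by omega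
    have hc : ((p : ℕ) : ℂ) = (ℓ : ℂ) := by rw [hpl]
    rcases Nat.eq_zero_or_pos (p : ℕ) with hp0 | hp0
    · have hl0 : ℓ = 0 := by omega
      subst hl0
      have h3 : ((p : ℕ) : ℂ) = 0 := by rw [hp0]; simp
      rw [h3]
      push_cast
      ring
    · have h4 : ((p-1 : Fin (ℓ+1)) : ℕ) = (p : ℕ) - 1 := by
        rw [Fin.coe_sub_one]
        simp [Fin.ext_iff, Nat.pos_iff_ne_zero.1 hp0]
      rw [h4, hc]
      ring
lemma h2q_ne (q : ℕ) : (2*(q : ℂ)+1) ≠ 0 := by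
  intro hc
  have : ((2*q+1 : ℕ) : ℂ) = 0 := by push_cast; linear_combination hc
  exact Nat.cast_ne_zero.2 (by omega) this

lemma sumQ1 (ℓ : ℕ) (p q : Fin (ℓ+1)) :
    ∑ r, Umat ℓ p r * Q1 ℓ r q
    = (((q : ℕ) : ℂ)+1) * ((ℓ : ℂ) - (q : ℕ)) / (2*((q : ℕ) : ℂ)+1) * hahnU ℓ (p : ℕ) ((q : ℕ)+1) := by
  rcases Nat.lt_or_ge (q : ℕ) ℓ with hq | hq
  · have hr : ((q : ℕ)+1) < ℓ+1 := by omega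
    rw [Finset.sum_eq_single (⟨(q : ℕ)+1, hr⟩ : Fin (ℓ+1))]
    · simp only [Umat, Q1, Matrix.of_apply]
      rw [if_true]
      have h2q := h2q_ne (q : ℕ)
      push_cast
      rw [show (2*(((q : ℕ) : ℂ)+1)-1) = 2*((q : ℕ) : ℂ)+1 by ring]
      field_simp
      ring
    · intro b _ hb
      have : ¬ ((b : ℕ) = (q : ℕ)+1) := by
        intro hc
        exact hb (Fin.ext hc)
      simp [Q1, this]
    · simp
  · have hql : (q : ℕ) = ℓ := by omega
    have : ∀ r : Fin (ℓ+1), Umat ℓ p r * Q1 ℓ r q = 0 := by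
      intro r
      have : ¬ ((r : ℕ) = (q : ℕ)+1) := by omega
      simp [Q1, this]
    rw [Finset.sum_congr rfl (fun r _ => this r), Finset.sum_const, smul_zero]
    rw [show ((ℓ : ℂ) - ((q : ℕ) : ℂ)) = 0 by rw [hql]; ring]
    ring

lemma sumQ0 (ℓ : ℕ) (p q : Fin (ℓ+1)) :
    ∑ r, Umat ℓ p r * Q0 ℓ r q
    = ((q : ℕ) : ℂ) * ((ℓ : ℂ) + (q : ℕ) + 1) / (2*((q : ℕ) : ℂ)+1) * hahnU ℓ (p : ℕ) ((q : ℕ)-1) := by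
  rcases Nat.eq_zero_or_pos (q : ℕ) with hq0 | hq0
  · have : ∀ r : Fin (ℓ+1), Umat ℓ p r * Q0 ℓ r q = 0 := by
      intro r
      have : ¬ ((q : ℕ) = (r : ℕ)+1) := by omega
      simp [Q0, this]
    rw [Finset.sum_congr rfl (fun r _ => this r), Finset.sum_const, smul_zero]
    rw [show (((q : ℕ)) : ℂ) = 0 by rw [hq0]; exact Nat.cast_zero]
    ring
  · have hr : ((q : ℕ)-1) < ℓ+1 := by omega
    rw [Finset.sum_eq_single (⟨(q : ℕ)-1, hr⟩ : Fin (ℓ+1))]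
    · simp only [Umat, Q0, Matrix.of_apply]
      rw [if_pos (show (q : ℕ) = (q : ℕ)-1+1 by omega)]
      have h2q := h2q_ne (q : ℕ)
      have hc1 : (((q : ℕ) - 1 : ℕ) : ℂ) = ((q : ℕ) : ℂ) - 1 := by push_cast [hq0]; ring
      simp only [hc1]
      rw [show (2*(((q : ℕ) : ℂ) - 1)+3) = 2*((q : ℕ) : ℂ)+1 by ring]
      field_simp
      ring
    · intro b _ hb
      have : ¬ ((q : ℕ) = (b : ℕ)+1) := by
        intro hc
        exact hb (Fin.ext (show (b : ℕ) = (q : ℕ)-1 by omega))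
      simp [Q0, this]
    · simp

lemma rhs_entry (ℓ : ℕ) (p q : Fin (ℓ+1)) :
    (Umat ℓ * (Q1 ℓ * Jmat ℓ - Q0 ℓ * (Jmat ℓ + 1))) p q
    = ((q : ℕ) : ℂ)*(((q : ℕ) : ℂ)+1)*((ℓ : ℂ)-(q : ℕ)) / (2*((q : ℕ) : ℂ)+1) * hahnU ℓ (p : ℕ) ((q : ℕ)+1)
      - ((q : ℕ) : ℂ)*(((q : ℕ) : ℂ)+1)*((ℓ : ℂ)+(q : ℕ)+1) / (2*((q : ℕ) : ℂ)+1) * hahnU ℓ (p : ℕ) ((q : ℕ)-1) := by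
  rw [Matrix.mul_apply]
  have hJ1 : Jmat ℓ + 1 = Matrix.diagonal (fun j : Fin (ℓ+1) => ((j : ℕ) : ℂ) + 1) := by
    rw [Jmat, ← Matrix.diagonal_one, ← Matrix.diagonal_add]
  have hM : ∀ r, (Q1 ℓ * Jmat ℓ - Q0 ℓ * (Jmat ℓ + 1)) r q
      = Q1 ℓ r q * ((q : ℕ) : ℂ) - Q0 ℓ r q * (((q : ℕ) : ℂ) + 1) := by
    intro r
    rw [Matrix.sub_apply, hJ1, Jmat, Matrix.mul_diagonal, Matrix.mul_diagonal]
  simp only [hM, mul_sub, ← mul_assoc, Finset.sum_sub_distrib, ← Finset.sum_mul]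
  rw [sumQ1, sumQ0]
  ring


/-- `(C₁ - C₀) U = U (Q₁ J - Q₀ (J + I))`. -/
theorem C1_sub_C0_mul_U (ℓ : ℕ) :
    (C1 ℓ - C0 ℓ) * Umat ℓ = Umat ℓ * (Q1 ℓ * Jmat ℓ - Q0 ℓ * (Jmat ℓ + 1)) := by
  ext p q
  rw [lhs_entry, rhs_entry]
  have hjl : (p : ℕ) ≤ ℓ := Nat.lt_succ_iff.1 p.isLt
  have hkl : (q : ℕ) ≤ ℓ := Nat.lt_succ_iff.1 q.isLt
  have K := key ℓ (p : ℕ) (q : ℕ) hjl hkl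
  have h2q := h2q_ne (q : ℕ)
  rw [div_mul_eq_mul_div, div_mul_eq_mul_div, div_sub_div_same, eq_div_iff h2q]
  linear_combination K
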